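/- arXiv:1012.2254 — 2 statements merged into one kernel-verified Lean document; each statement's English description precedes it below -/
import Mathlib

section
/- Let f be a non-negative, strictly increasing, convex function on [0,∞) with f(0)=0, and let A, B be PSD Hermitian matrices with A ≥ ‖B‖_∞ · I. Then for every k, λ_k^↓(f(A−B)) ≤ λ_k^↓(f(A) − f(B)). -/
open Matrix
open scoped ComplexOrder

/-- `f` applied to a matrix via the spectral decomposition (junk value `0` if
the matrix is not Hermitian). -/
noncomputable def matFun {n : ℕ} (f : ℝ → ℝ) (A : Matrix (Fin n) (Fin n) ℂ) :
    Matrix (Fin n) (Fin n) ℂ :=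
  if hA : A.IsHermitian then
    (hA.eigenvectorUnitary : Matrix (Fin n) (Fin n) ℂ) *
      Matrix.diagonal (fun i => (f (hA.eigenvalues i) : ℂ)) *
      (star hA.eigenvectorUnitary : Matrix (Fin n) (Fin n) ℂ)
  else 0

/-- The eigenvalues of a Hermitian matrix, sorted in non-increasing order
(junk value `0` if the matrix is not Hermitian). -/
noncomputable def eigsDesc {n : ℕ} (A : Matrix (Fin n) (Fin n) ℂ) : Fin n → ℝ :=
  if hA : A.IsHermitian then (fun k => hA.eigenvalues (Tuple.sort hA.eigenvalues (Fin.rev k)))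
  else 0

/-- The absolute value `|X| = (XᴴX)^{1/2}` of a matrix. -/
noncomputable def matAbs {n : ℕ} (X : Matrix (Fin n) (Fin n) ℂ) : Matrix (Fin n) (Fin n) ℂ :=
  (Matrix.posSemidef_conjTranspose_mul_self X).1.eigenvectorUnitary.1 *
    Matrix.diagonal ((↑) ∘ (√·) ∘ (Matrix.posSemidef_conjTranspose_mul_self X).1.eigenvalues) *
    (star (Matrix.posSemidef_conjTranspose_mul_self X).1.eigenvectorUnitary : Matrix (Fin n) (Fin n) ℂ)

/-- The singular values of `X`, sorted in non-increasing order. -/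
noncomputable def svalsDesc {n : ℕ} (X : Matrix (Fin n) (Fin n) ℂ) : Fin n → ℝ :=
  eigsDesc (matAbs X)

/-- Sum of the first `k` entries of a vector indexed by `Fin n`. -/
noncomputable def kSum {n : ℕ} (μ : Fin n → ℝ) (k : ℕ) : ℝ :=
  ∑ j ∈ Finset.univ.filter (fun j : Fin n => (j : ℕ) < k), μ j

/-- The operator norm: the largest singular value. -/
noncomputable def opNorm {n : ℕ} (X : Matrix (Fin n) (Fin n) ℂ) : ℝ :=
  ⨆ i, svalsDesc X i

open Finset

/-! Choose a unit vector `v` in the span of the eigenvectors of `A - B` for its `k + 1` largest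
eigenvalues and in the span of the eigenvectors of `M = f(A) - f(B)` for its `n - k` smallest
ones; they meet by a dimension count. In the eigenbases, `⟨v, A v⟩ = ∑ pᵢ aᵢ` and
`⟨v, B v⟩ = ∑ qⱼ bⱼ` with probability weights `p`, `q`, and `A ≥ ‖B‖ I` gives
`bⱼ ≤ ‖B‖ ≤ α := ∑ pᵢ aᵢ`. Jensen gives `f α ≤ ∑ pᵢ f(aᵢ)`; superadditivity of `f` gives
`f(bⱼ) ≤ f α - f(α - bⱼ)`, and Jensen again `f(α - ∑ qⱼ bⱼ) ≤ ∑ qⱼ f(α - bⱼ)`. Hence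
`f(λ_k(A - B)) ≤ f ⟨v, (A - B) v⟩ ≤ ⟨v, M v⟩ ≤ λ_k(M)`, and `λ_k(f(A - B)) = f(λ_k(A - B))`
because `f` is monotone and `A - B ≥ 0`. -/

section Convex

theorem ConvexOn.add_le_map_add {f : ℝ → ℝ} (hf : ConvexOn ℝ (Set.Ici 0) f) (hf0 : f 0 = 0)
    {x y : ℝ} (hx : 0 ≤ x) (hy : 0 ≤ y) : f x + f y ≤ f (x + y) := by
  rcases (add_nonneg hx hy).eq_or_lt with hxy | hxy
  · obtain ⟨rfl, rfl⟩ : x = 0 ∧ y = 0 := ⟨by linarith, by linarith⟩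
    simp [hf0]
  -- On `[0, x + y]` the chord from `(0, 0)` gives `f z ≤ z / (x + y) * f (x + y)`.
  have chord : ∀ z, 0 ≤ z → z ≤ x + y → f z ≤ z / (x + y) * f (x + y) := fun z hz hzs => by
    have := hf.2 (Set.mem_Ici.2 hxy.le) (Set.mem_Ici.2 le_rfl)
      (div_nonneg hz hxy.le) (div_nonneg (sub_nonneg.2 hzs) hxy.le)
      (by field_simp; ring)
    simpa [hf0, div_mul_cancel₀ z hxy.ne'] using this
  have hsum : x / (x + y) * f (x + y) + y / (x + y) * f (x + y) = f (x + y) := by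
    field_simp
  linarith [chord x hx (by linarith), chord y hy (by linarith)]

theorem ConvexOn.map_sum_sub_sum_le {ι κ : Type*} {f : ℝ → ℝ}
    (hf : ConvexOn ℝ (Set.Ici 0) f) (hf0 : f 0 = 0) {s : Finset ι} {t : Finset κ}
    {p a : ι → ℝ} {q b : κ → ℝ} (hp : ∀ i ∈ s, 0 ≤ p i) (hp1 : ∑ i ∈ s, p i = 1)
    (hq : ∀ j ∈ t, 0 ≤ q j) (hq1 : ∑ j ∈ t, q j = 1) (ha : ∀ i ∈ s, 0 ≤ a i)
    (hb : ∀ j ∈ t, 0 ≤ b j) (hba : ∀ j ∈ t, b j ≤ ∑ i ∈ s, p i * a i) :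
    f (∑ i ∈ s, p i * a i - ∑ j ∈ t, q j * b j)
      ≤ ∑ i ∈ s, p i * f (a i) - ∑ j ∈ t, q j * f (b j) := by
  set α := ∑ i ∈ s, p i * a i
  have jensen_a : f α ≤ ∑ i ∈ s, p i * f (a i) := hf.map_sum_le hp hp1 ha
  have jensen_b : f (α - ∑ j ∈ t, q j * b j) ≤ ∑ j ∈ t, q j * f (α - b j) := by
    have := hf.map_sum_le hq hq1 (p := fun j => α - b j)
      fun j hj => Set.mem_Ici.2 (sub_nonneg.2 (hba j hj))
    simpa [smul_eq_mul, mul_sub, sum_sub_distrib, ← sum_mul, hq1] using this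
  -- Superadditivity splits `f α` as `f (b j) + f (α - b j)` at each `j`.
  have split : ∑ j ∈ t, q j * f (b j) ≤ f α - ∑ j ∈ t, q j * f (α - b j) := by
    rw [← one_mul (f α), ← hq1, sum_mul, ← sum_sub_distrib]
    refine sum_le_sum fun j hj => ?_
    have := hf.add_le_map_add hf0 (hb j hj) (sub_nonneg.2 (hba j hj))
    rw [add_sub_cancel] at this
    nlinarith [hq j hj]
  linarith

end Convex

section DescSort

variable {n : ℕ}

noncomputable def descPerm (μ : Fin n → ℝ) : Equiv.Perm (Fin n) :=
  Fin.revPerm.trans (Tuple.sort μ)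

noncomputable def descSort (μ : Fin n → ℝ) : Fin n → ℝ :=
  μ ∘ descPerm μ

theorem antitone_descSort (μ : Fin n → ℝ) : Antitone (descSort μ) :=
  fun _ _ hab => Tuple.monotone_sort μ (Fin.rev_le_rev.2 hab)

theorem descSort_apply_symm (μ : Fin n → ℝ) (i : Fin n) :
    descSort μ ((descPerm μ).symm i) = μ i :=
  congrArg μ ((descPerm μ).apply_symm_apply i)

theorem iSup_descSort (μ : Fin n → ℝ) : ⨆ k, descSort μ k = ⨆ i, μ i :=
  (descPerm μ).iSup_comp

theorem descSort_le_of_notMem_image_Ioi (μ : Fin n → ℝ) {k i : Fin n}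
    (hi : i ∉ (Ioi k).image (descPerm μ)) : descSort μ k ≤ μ i := by
  have hik : (descPerm μ).symm i ≤ k := by
    by_contra! hlt
    exact hi (mem_image.2 ⟨_, mem_Ioi.2 hlt, (descPerm μ).apply_symm_apply i⟩)
  simpa only [descSort_apply_symm] using antitone_descSort μ hik

theorem le_descSort_of_notMem_image_Iio (μ : Fin n → ℝ) {k i : Fin n}
    (hi : i ∉ (Iio k).image (descPerm μ)) : μ i ≤ descSort μ k := by
  have hki : k ≤ (descPerm μ).symm i := by
    by_contra! hlt
    exact hi (mem_image.2 ⟨_, mem_Iio.2 hlt, (descPerm μ).apply_symm_apply i⟩)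
  simpa only [descSort_apply_symm] using antitone_descSort μ hki

theorem card_image_Ioi_add_card_image_Iio_lt (μ ρ : Fin n → ℝ) (k : Fin n) :
    #((Ioi k).image (descPerm μ)) + #((Iio k).image (descPerm ρ)) < n := by
  simp only [card_image_of_injective _ (Equiv.injective _), Fin.card_Ioi, Fin.card_Iio]
  omega

theorem descSort_comp {μ : Fin n → ℝ} {f : ℝ → ℝ} {s : Set ℝ} (hf : MonotoneOn f s)
    (hμ : ∀ i, μ i ∈ s) : descSort (f ∘ μ) = f ∘ descSort μ := by
  have hsorted : Monotone ((f ∘ μ) ∘ Tuple.sort μ) :=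
    fun _ _ hab => hf (hμ _) (hμ _) (Tuple.monotone_sort μ hab)
  funext k
  exact congrFun (Tuple.comp_sort_eq_comp_iff_monotone.2 hsorted).symm k.rev

end DescSort

section QuadraticForm

variable {ι : Type*} [Fintype ι]

theorem exists_sum_normSq_eq_one_mulVec_eq_zero (W₁ W₂ : Matrix ι ι ℂ) {s t : Finset ι}
    (hst : #s + #t < Fintype.card ι) :
    ∃ v : ι → ℂ, ∑ i, Complex.normSq (v i) = 1 ∧
      (∀ i ∈ s, (W₁ *ᵥ v) i = 0) ∧ ∀ i ∈ t, (W₂ *ᵥ v) i = 0 := by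
  let Φ : (ι → ℂ) →ₗ[ℂ] (s → ℂ) × (t → ℂ) :=
    ((LinearMap.funLeft ℂ ℂ ((↑) : s → ι)).comp W₁.mulVecLin).prod
      ((LinearMap.funLeft ℂ ℂ ((↑) : t → ι)).comp W₂.mulVecLin)
  obtain ⟨x, hx, hx0⟩ := Submodule.exists_mem_ne_zero_of_ne_bot <|
    LinearMap.ker_ne_bot_of_finrank_lt (f := Φ) (by simpa using hst)
  set N := ∑ i, Complex.normSq (x i)
  have hN : 0 < N := by
    obtain ⟨i, hi⟩ := Function.ne_iff.1 hx0
    exact sum_pos' (fun j _ => Complex.normSq_nonneg _) ⟨i, mem_univ i, Complex.normSq_pos.2 hi⟩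
  refine ⟨((√N)⁻¹ : ℂ) • x, ?_, fun i hi => ?_, fun i hi => ?_⟩
  · simp only [Pi.smul_apply, smul_eq_mul, Complex.normSq_mul, ← mul_sum]
    rw [← Complex.ofReal_inv, Complex.normSq_ofReal, ← mul_inv, Real.mul_self_sqrt hN.le]
    exact inv_mul_cancel₀ hN.ne'
  · have : (W₁ *ᵥ x) i = 0 := by simpa [Φ] using congrArg (·.1 ⟨i, hi⟩) (LinearMap.mem_ker.1 hx)
    rw [mulVec_smul, Pi.smul_apply, this, smul_zero]
  · have : (W₂ *ᵥ x) i = 0 := by simpa [Φ] using congrArg (·.2 ⟨i, hi⟩) (LinearMap.mem_ker.1 hx)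
    rw [mulVec_smul, Pi.smul_apply, this, smul_zero]

theorem re_star_dotProduct_conj_diagonal_mulVec [DecidableEq ι] (U : Matrix ι ι ℂ) (ν : ι → ℝ)
    (v : ι → ℂ) : (star v ⬝ᵥ ((U * diagonal (fun i => (ν i : ℂ)) * star U) *ᵥ v)).re =
      ∑ i, Complex.normSq ((star U *ᵥ v) i) * ν i := by
  have hvU : star v ᵥ* U = star (star U *ᵥ v) := by
    rw [star_mulVec, star_eq_conjTranspose, conjTranspose_conjTranspose]
  rw [← mulVec_mulVec, ← mulVec_mulVec, dotProduct_mulVec, hvU]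
  generalize star U *ᵥ v = c
  simp only [dotProduct, mulVec_diagonal, Pi.star_apply, Complex.re_sum]
  refine sum_congr rfl fun i _ => ?_
  rw [Complex.normSq_apply]
  simp only [Complex.star_def, Complex.mul_re, Complex.mul_im, Complex.conj_re, Complex.conj_im,
    Complex.ofReal_re, Complex.ofReal_im]
  ring

theorem re_star_dotProduct_self [DecidableEq ι] (v : ι → ℂ) :
    (star v ⬝ᵥ v).re = ∑ i, Complex.normSq (v i) := by
  simpa using re_star_dotProduct_conj_diagonal_mulVec (1 : Matrix ι ι ℂ) 1 v

theorem sum_normSq_star_mulVec [DecidableEq ι] (U : unitaryGroup ι ℂ) (v : ι → ℂ) :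
    ∑ i, Complex.normSq ((star (U : Matrix ι ι ℂ) *ᵥ v) i) = ∑ i, Complex.normSq (v i) := by
  have h := re_star_dotProduct_conj_diagonal_mulVec (U : Matrix ι ι ℂ) 1 v
  simp only [Pi.one_apply, Complex.ofReal_one, diagonal_one, mul_one,
    mem_unitaryGroup_iff.1 U.2, one_mulVec] at h
  rw [← h, re_star_dotProduct_self]

theorem isHermitian_conj_diagonal [DecidableEq ι] (U : Matrix ι ι ℂ) (ν : ι → ℝ) :
    (U * diagonal (fun i => (ν i : ℂ)) * star U).IsHermitian := by
  rw [star_eq_conjTranspose]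
  exact isHermitian_mul_mul_conjTranspose U
    (isHermitian_diagonal_of_self_adjoint _ (funext fun i => Complex.conj_ofReal (ν i)))

theorem Matrix.IsHermitian.eq_conj_diagonal [DecidableEq ι] {M : Matrix ι ι ℂ}
    (hM : M.IsHermitian) : M = (hM.eigenvectorUnitary : Matrix ι ι ℂ) *
      diagonal (fun i => (hM.eigenvalues i : ℂ)) * star (hM.eigenvectorUnitary : Matrix ι ι ℂ) :=
  hM.spectral_theorem

theorem Matrix.IsHermitian.re_star_dotProduct_mulVec [DecidableEq ι] {M : Matrix ι ι ℂ}
    (hM : M.IsHermitian) (v : ι → ℂ) : (star v ⬝ᵥ (M *ᵥ v)).re =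
      ∑ i, Complex.normSq ((star (hM.eigenvectorUnitary : Matrix ι ι ℂ) *ᵥ v) i) *
        hM.eigenvalues i := by
  conv_lhs => rw [hM.eq_conj_diagonal]
  exact re_star_dotProduct_conj_diagonal_mulVec _ _ v

open scoped MatrixOrder in
theorem posSemidef_sub_of_eigenvalues_le [DecidableEq ι] {A B : Matrix ι ι ℂ}
    (hB : B.IsHermitian) {c : ℝ} (hBc : ∀ i, hB.eigenvalues i ≤ c)
    (hA : (A - (c : ℂ) • 1).PosSemidef) : (A - B).PosSemidef := by
  have hB_le : B ≤ algebraMap ℝ _ c := by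
    refine le_algebraMap_of_spectrum_le ?_ hB.isSelfAdjoint
    rw [hB.spectrum_real_eq_range_eigenvalues]
    rintro _ ⟨i, rfl⟩
    exact hBc i
  have le_A : algebraMap ℝ _ c ≤ A := by
    rwa [Matrix.le_iff, Algebra.algebraMap_eq_smul_one, ← Complex.coe_smul]
  exact Matrix.le_iff.1 (hB_le.trans le_A)

theorem le_re_star_dotProduct_mulVec [DecidableEq ι] {A : Matrix ι ι ℂ} {c : ℝ}
    (hA : (A - (c : ℂ) • 1).PosSemidef) {v : ι → ℂ} (hv : ∑ i, Complex.normSq (v i) = 1) :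
    c ≤ (star v ⬝ᵥ (A *ᵥ v)).re := by
  have := hA.re_dotProduct_nonneg v
  rw [sub_mulVec, smul_mulVec, one_mulVec, dotProduct_sub, dotProduct_smul] at this
  simp only [RCLike.re_to_complex, Complex.sub_re, smul_eq_mul, Complex.re_ofReal_mul,
    re_star_dotProduct_self, hv] at this
  linarith

end QuadraticForm

section Spectral

variable {n : ℕ}

theorem matFun_of_isHermitian (f : ℝ → ℝ) {M : Matrix (Fin n) (Fin n) ℂ} (hM : M.IsHermitian) :
    matFun f M = (hM.eigenvectorUnitary : Matrix (Fin n) (Fin n) ℂ) *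
      diagonal (fun i => ((f ∘ hM.eigenvalues) i : ℂ)) *
        star (hM.eigenvectorUnitary : Matrix (Fin n) (Fin n) ℂ) := by
  rw [matFun, dif_pos hM]
  rfl

theorem eigsDesc_of_isHermitian {M : Matrix (Fin n) (Fin n) ℂ} (hM : M.IsHermitian) :
    eigsDesc M = descSort hM.eigenvalues := by
  rw [eigsDesc, dif_pos hM]
  rfl

theorem exists_unit_descSort_le_and_le_descSort (U V : unitaryGroup (Fin n) ℂ)
    (ν ρ : Fin n → ℝ) (k : Fin n) : ∃ v : Fin n → ℂ, ∑ i, Complex.normSq (v i) = 1 ∧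
      descSort ν k ≤ (star v ⬝ᵥ (((U : Matrix (Fin n) (Fin n) ℂ) *
        diagonal (fun i => (ν i : ℂ)) * star (U : Matrix (Fin n) (Fin n) ℂ)) *ᵥ v)).re ∧
      (star v ⬝ᵥ (((V : Matrix (Fin n) (Fin n) ℂ) * diagonal (fun i => (ρ i : ℂ)) *
        star (V : Matrix (Fin n) (Fin n) ℂ)) *ᵥ v)).re ≤ descSort ρ k := by
  obtain ⟨v, hv, hUv, hVv⟩ := exists_sum_normSq_eq_one_mulVec_eq_zero
    (star (U : Matrix (Fin n) (Fin n) ℂ)) (star (V : Matrix (Fin n) (Fin n) ℂ))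
    (by simpa using card_image_Ioi_add_card_image_Iio_lt ν ρ k)
  refine ⟨v, hv, ?_, ?_⟩
  · rw [re_star_dotProduct_conj_diagonal_mulVec, ← mul_one (descSort ν k), ← hv,
      ← sum_normSq_star_mulVec U v, mul_sum]
    refine sum_le_sum fun i _ => ?_
    by_cases hi : i ∈ (Ioi k).image (descPerm ν)
    · simp [hUv i hi]
    · rw [mul_comm]
      exact mul_le_mul_of_nonneg_left (descSort_le_of_notMem_image_Ioi ν hi)
        (Complex.normSq_nonneg _)
  · rw [re_star_dotProduct_conj_diagonal_mulVec, ← mul_one (descSort ρ k), ← hv,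
      ← sum_normSq_star_mulVec V v, mul_sum]
    refine sum_le_sum fun i _ => ?_
    by_cases hi : i ∈ (Iio k).image (descPerm ρ)
    · simp [hVv i hi]
    · rw [mul_comm]
      exact mul_le_mul_of_nonneg_right (le_descSort_of_notMem_image_Iio ρ hi)
        (Complex.normSq_nonneg _)

theorem exists_unit_eigsDesc_le_and_le_eigsDesc {M N : Matrix (Fin n) (Fin n) ℂ}
    (hM : M.IsHermitian) (hN : N.IsHermitian) (k : Fin n) :
    ∃ v : Fin n → ℂ, ∑ i, Complex.normSq (v i) = 1 ∧
      eigsDesc M k ≤ (star v ⬝ᵥ (M *ᵥ v)).re ∧ (star v ⬝ᵥ (N *ᵥ v)).re ≤ eigsDesc N k := by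
  rw [eigsDesc_of_isHermitian hM, eigsDesc_of_isHermitian hN]
  simpa only [← hM.eq_conj_diagonal, ← hN.eq_conj_diagonal] using
    exists_unit_descSort_le_and_le_descSort hM.eigenvectorUnitary hN.eigenvectorUnitary
      hM.eigenvalues hN.eigenvalues k

theorem eigsDesc_conj_diagonal (U : unitaryGroup (Fin n) ℂ) (ν : Fin n → ℝ) :
    eigsDesc ((U : Matrix (Fin n) (Fin n) ℂ) * diagonal (fun i => (ν i : ℂ)) *
      star (U : Matrix (Fin n) (Fin n) ℂ)) = descSort ν := by
  have hM := isHermitian_conj_diagonal (U : Matrix (Fin n) (Fin n) ℂ) ν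
  rw [eigsDesc_of_isHermitian hM]
  funext k
  apply le_antisymm
  · obtain ⟨v, -, h₁, h₂⟩ :=
      exists_unit_descSort_le_and_le_descSort hM.eigenvectorUnitary U hM.eigenvalues ν k
    rw [← hM.eq_conj_diagonal] at h₁
    exact h₁.trans h₂
  · obtain ⟨v, -, h₁, h₂⟩ :=
      exists_unit_descSort_le_and_le_descSort U hM.eigenvectorUnitary ν hM.eigenvalues k
    rw [← hM.eq_conj_diagonal] at h₂
    exact h₁.trans h₂

theorem eigsDesc_matFun {f : ℝ → ℝ} {s : Set ℝ} {M : Matrix (Fin n) (Fin n) ℂ}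
    (hM : M.IsHermitian) (hf : MonotoneOn f s) (hs : ∀ i, hM.eigenvalues i ∈ s) :
    eigsDesc (matFun f M) = f ∘ eigsDesc M := by
  rw [matFun_of_isHermitian f hM, eigsDesc_conj_diagonal, eigsDesc_of_isHermitian hM]
  exact descSort_comp hf hs

theorem isHermitian_matFun (f : ℝ → ℝ) {M : Matrix (Fin n) (Fin n) ℂ} (hM : M.IsHermitian) :
    (matFun f M).IsHermitian :=
  matFun_of_isHermitian f hM ▸ isHermitian_conj_diagonal _ _

open scoped MatrixOrder in
theorem matAbs_of_posSemidef {B : Matrix (Fin n) (Fin n) ℂ} (hB : B.PosSemidef) :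
    matAbs B = B := by
  have h1 : matAbs B = cfc Real.sqrt (Bᴴ * B) := by
    rw [(posSemidef_conjTranspose_mul_self B).1.cfc_eq, IsHermitian.cfc,
      Unitary.conjStarAlgAut_apply, matAbs]
    rfl
  rw [h1, hB.1.eq, ← cfcₙ_eq_cfc (hf0 := by simp), ← CFC.sqrt_eq_real_sqrt (B * B)
    (by simpa [hB.1.eq] using (posSemidef_conjTranspose_mul_self B).nonneg)]
  exact CFC.sqrt_mul_self B hB.nonneg

theorem eigenvalues_le_opNorm {B : Matrix (Fin n) (Fin n) ℂ} (hB : B.PosSemidef) (i : Fin n) :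
    hB.1.eigenvalues i ≤ opNorm B := by
  rw [opNorm, svalsDesc, matAbs_of_posSemidef hB, eigsDesc_of_isHermitian hB.1, iSup_descSort]
  exact le_ciSup (Set.finite_range _).bddAbove i

theorem eigsDesc_nonneg {M : Matrix (Fin n) (Fin n) ℂ} (hM : M.PosSemidef) (k : Fin n) :
    0 ≤ eigsDesc M k := by
  rw [eigsDesc_of_isHermitian hM.1]
  exact hM.eigenvalues_nonneg _

theorem re_star_dotProduct_matFun_mulVec (f : ℝ → ℝ) {M : Matrix (Fin n) (Fin n) ℂ}
    (hM : M.IsHermitian) (v : Fin n → ℂ) : (star v ⬝ᵥ (matFun f M *ᵥ v)).re =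
      ∑ i, Complex.normSq ((star (hM.eigenvectorUnitary : Matrix (Fin n) (Fin n) ℂ) *ᵥ v) i) *
        f (hM.eigenvalues i) := by
  rw [matFun_of_isHermitian f hM, re_star_dotProduct_conj_diagonal_mulVec]
  rfl

end Spectral

theorem eig_convex_sub_general {n : ℕ} (f : ℝ → ℝ)
    (hfmono : StrictMonoOn f (Set.Ici (0 : ℝ)))
    (hfconv : ConvexOn ℝ (Set.Ici (0 : ℝ)) f) (hf00 : f 0 = 0)
    (A B : Matrix (Fin n) (Fin n) ℂ) (hA : A.PosSemidef) (hB : B.PosSemidef)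
    (hAB : (A - (opNorm B : ℂ) • 1).PosSemidef) (k : Fin n) :
    eigsDesc (matFun f (A - B)) k ≤ eigsDesc (matFun f A - matFun f B) k := by
  have hC : (A - B).PosSemidef :=
    posSemidef_sub_of_eigenvalues_le hB.1 (eigenvalues_le_opNorm hB) hAB
  have hM := (isHermitian_matFun f hA.1).sub (isHermitian_matFun f hB.1)
  obtain ⟨v, hv, hCv, hMv⟩ := exists_unit_eigsDesc_le_and_le_eigsDesc hC.1 hM k
  have hAv := hA.1.re_star_dotProduct_mulVec v
  have hBv := hB.1.re_star_dotProduct_mulVec v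
  have hB_le_A : ∀ j, hB.1.eigenvalues j ≤ (star v ⬝ᵥ (A *ᵥ v)).re := fun j =>
    (eigenvalues_le_opNorm hB j).trans (le_re_star_dotProduct_mulVec hAB hv)
  have ht := eigsDesc_nonneg hC k
  rw [eigsDesc_matFun hC.1 hfmono.monotoneOn hC.eigenvalues_nonneg]
  calc f (eigsDesc (A - B) k)
      ≤ f (star v ⬝ᵥ ((A - B) *ᵥ v)).re := hfmono.monotoneOn ht (ht.trans hCv) hCv
    _ = f ((star v ⬝ᵥ (A *ᵥ v)).re - (star v ⬝ᵥ (B *ᵥ v)).re) := by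
      rw [sub_mulVec, dotProduct_sub, Complex.sub_re]
    _ ≤ (star v ⬝ᵥ (matFun f A *ᵥ v)).re - (star v ⬝ᵥ (matFun f B *ᵥ v)).re := by
      rw [hBv, hAv, re_star_dotProduct_matFun_mulVec f hA.1,
        re_star_dotProduct_matFun_mulVec f hB.1]
      exact hfconv.map_sum_sub_sum_le hf00 (fun _ _ => Complex.normSq_nonneg _)
        ((sum_normSq_star_mulVec _ v).trans hv) (fun _ _ => Complex.normSq_nonneg _)
        ((sum_normSq_star_mulVec _ v).trans hv) (fun i _ => hA.eigenvalues_nonneg i)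
        (fun j _ => hB.eigenvalues_nonneg j) fun j _ => hAv ▸ hB_le_A j
    _ = (star v ⬝ᵥ ((matFun f A - matFun f B) *ᵥ v)).re := by
      rw [sub_mulVec, dotProduct_sub, Complex.sub_re]
    _ ≤ _ := hMv

/-- For a non-negative strictly increasing convex `f` on `[0,∞)` with `f 0 = 0`
and PSD `A, B` with `A ≥ ‖B‖_∞ · I`, one has
`λ_k^↓(f(A−B)) ≤ λ_k^↓(f(A) − f(B))` for every `k`. -/
theorem eig_convex_sub {n : ℕ} (f : ℝ → ℝ)
    (hf0 : ∀ x ∈ Set.Ici (0 : ℝ), 0 ≤ f x)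
    (hfmono : StrictMonoOn f (Set.Ici (0 : ℝ)))
    (hfconv : ConvexOn ℝ (Set.Ici (0 : ℝ)) f) (hf00 : f 0 = 0)
    (A B : Matrix (Fin n) (Fin n) ℂ) (hA : A.PosSemidef) (hB : B.PosSemidef)
    (hAB : (A - (opNorm B : ℂ) • 1).PosSemidef) (k : Fin n) :
    eigsDesc (matFun f (A - B)) k ≤ eigsDesc (matFun f A - matFun f B) k :=
  eig_convex_sub_general f hfmono hfconv hf00 A B hA hB hAB k
end

section
/- Let g be a non-negative increasing concave function on [0,∞) with g(0)=0, g(1)=1 (so g(x) ≥ x for 0 ≤ x ≤ 1), and suppose the one-sided derivative satisfies g'(x) ≤ 1 for all x ≥ 0. Then for PSD matrices B, C with ‖B‖_∞ ≤ 1, and every k: λ_k^↓(g(C+B) − B) ≤ g(λ_k^↓(C)). -/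
open Matrix
open scoped ComplexOrder

/-!
Let `x₀ = λ_k^↓(C)` and let `d ∈ [0, 1]` be the right derivative of `g` at `x₀`. By concavity
`g ≤ ℓ` on `[0, ∞)` for the tangent line `ℓ x = g x₀ + d (x - x₀)`, so in the Loewner order
`g(C + B) - B ≤ ℓ(C + B) - B = ℓ(C) - (1 - d) B ≤ ℓ(C)`. Since `ℓ` is increasing, the
Courant–Fischer principle turns this into `λ_k^↓(g(C + B) - B) ≤ ℓ(λ_k^↓(C)) = g(x₀)`.
-/

open Set Filter Topology Module
open scoped MatrixOrder

lemma hasDerivWithinAt_Ioi_of_tendsto_slope_zero_right {f : ℝ → ℝ} {x d : ℝ}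
    (h : Tendsto (fun t => (f (x + t) - f x) / t) (𝓝[>] 0) (𝓝 d)) :
    HasDerivWithinAt f d (Ioi x) x := by
  rw [hasDerivWithinAt_iff_tendsto_slope' self_notMem_Ioi, ← add_zero x,
    ← Filter.map_add_left_nhdsGT, tendsto_map'_iff]
  simpa [Function.comp_def, slope_def_field] using h

lemma MonotoneOn.nonneg_of_hasDerivWithinAt_Ioi {S : Set ℝ} {f : ℝ → ℝ} {x f' : ℝ}
    (hf : MonotoneOn f S) (hx : x ∈ S) (hS : S ∈ 𝓝[>] x)
    (hf' : HasDerivWithinAt f f' (Ioi x) x) : 0 ≤ f' := by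
  refine ge_of_tendsto ((hasDerivWithinAt_iff_tendsto_slope' self_notMem_Ioi).mp hf') ?_
  filter_upwards [hS] with t htS
  exact hf.slope_nonneg hx htS

namespace ConcaveOn

variable {S : Set ℝ} {f : ℝ → ℝ} {x y f' : ℝ}

lemma le_slope_of_hasDerivWithinAt_Ioi_of_lt (hfc : ConcaveOn ℝ S f) (hy : y ∈ S)
    (hS : S ∈ 𝓝[>] x) (hyx : y < x) (hf' : HasDerivWithinAt f f' (Ioi x) x) :
    f' ≤ slope f y x := by
  refine le_of_tendsto ((hasDerivWithinAt_iff_tendsto_slope' self_notMem_Ioi).mp hf') ?_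
  filter_upwards [hS, self_mem_nhdsWithin] with t htS (hxt : x < t)
  simpa only [slope_def_field] using hfc.slope_anti_adjacent hy htS hyx hxt

lemma le_tangent_of_hasDerivWithinAt_Ioi (hfc : ConcaveOn ℝ S f) (hx : x ∈ S) (hy : y ∈ S)
    (hS : S ∈ 𝓝[>] x) (hf' : HasDerivWithinAt f f' (Ioi x) x) :
    f y ≤ f x + f' * (y - x) := by
  rcases lt_trichotomy y x with hyx | rfl | hxy
  · have := hfc.le_slope_of_hasDerivWithinAt_Ioi_of_lt hy hS hyx hf'
    rw [slope_def_field, le_div_iff₀ (sub_pos.2 hyx)] at this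
    linarith
  · simp
  · have := hfc.slope_le_of_hasDerivWithinAt_Ioi hx hy hxy hf'
    rw [slope_def_field, div_le_iff₀ (sub_pos.2 hxy)] at this
    linarith

end ConcaveOn

lemma sum_mul_le_sum_mul_of_le_on_support {ι : Type*} [Fintype ι] {I : Finset ι}
    {μ ν w : ι → ℝ} (hw : ∀ i, 0 ≤ w i) (hI : ∀ i ∉ I, w i = 0) (hμν : ∀ i ∈ I, μ i ≤ ν i) :
    ∑ i, μ i * w i ≤ ∑ i, ν i * w i := by
  refine Finset.sum_le_sum fun i _ => ?_
  by_cases hi : i ∈ I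
  · exact mul_le_mul_of_nonneg_right (hμν i hi) (hw i)
  · simp [hI i hi]

section Supported

variable {K ι : Type*} [Field K] [DecidableEq ι]

lemma finrank_span_image_single_one [Fintype ι] (I : Finset ι) :
    finrank K (Submodule.span K ((Pi.single · (1 : K)) '' (I : Set ι))) = I.card := by
  rw [← Subtype.range_coe (s := (I : Set ι)), ← Set.range_comp, finrank_span_eq_card
    ((Pi.linearIndependent_single_one ι K).comp _ Subtype.val_injective)]
  simp

lemma apply_eq_zero_of_mem_span_image_single_one {I : Finset ι} {a : ι → K}
    (ha : a ∈ Submodule.span K ((Pi.single · (1 : K)) '' (I : Set ι))) {i : ι} (hi : i ∉ I) :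
    a i = 0 := by
  induction ha using Submodule.span_induction with
  | mem x hx =>
    obtain ⟨j, hj, rfl⟩ := hx
    exact Pi.single_eq_of_ne (fun h : i = j => hi (h ▸ hj)) 1
  | zero => rfl
  | add x y _ _ hx hy => simp [hx, hy]
  | smul c x _ hx => simp [hx]

lemma Matrix.exists_ne_zero_mulVec_eq_mulVec_of_lt_card_add_card [Fintype ι]
    {U V : Matrix ι ι K} (hU : IsUnit U) (hV : IsUnit V) {I J : Finset ι}
    (hIJ : Fintype.card ι < I.card + J.card) :
    ∃ a b : ι → K, a ≠ 0 ∧ (∀ i ∉ I, a i = 0) ∧ (∀ j ∉ J, b j = 0) ∧ U *ᵥ a = V *ᵥ b := by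
  set S : Finset ι → Submodule K (ι → K) := fun I =>
    Submodule.span K ((Pi.single · (1 : K)) '' (I : Set ι))
  have hfinrank {W : Matrix ι ι K} (hW : IsUnit W) (I : Finset ι) :
      finrank K ((S I).map W.mulVecLin) = I.card :=
    ((S I).equivMapOfInjective _ (mulVec_injective_of_isUnit hW)).finrank_eq.symm.trans
      (finrank_span_image_single_one I)
  have hnot : ¬ Disjoint ((S I).map U.mulVecLin) ((S J).map V.mulVecLin) := fun hdisj => by
    have := Submodule.finrank_add_finrank_le_of_disjoint hdisj
    rw [hfinrank hU, hfinrank hV, finrank_fintype_fun_eq_card] at this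
    omega
  rw [Submodule.disjoint_def] at hnot
  push Not at hnot
  obtain ⟨x, ⟨a, ha, rfl⟩, ⟨b, hb, hab⟩, hx⟩ := hnot
  exact ⟨a, b, fun h => hx (by simp [h]), fun i => apply_eq_zero_of_mem_span_image_single_one ha,
    fun j => apply_eq_zero_of_mem_span_image_single_one hb, hab.symm⟩

end Supported

namespace Matrix

section Spectral

variable {ι : Type*} [Fintype ι]

lemma star_dotProduct_self_eq_sum_normSq (a : ι → ℂ) :
    star a ⬝ᵥ a = ((∑ i, Complex.normSq (a i) : ℝ) : ℂ) := by
  simp [dotProduct, Complex.normSq_eq_conj_mul_self]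

variable [DecidableEq ι]

lemma dotProduct_unitary_mulVec {U : Matrix ι ι ℂ} (hU : U ∈ unitaryGroup ι ℂ) (a b : ι → ℂ) :
    star (U *ᵥ a) ⬝ᵥ (U *ᵥ b) = star a ⬝ᵥ b := by
  rw [star_mulVec, dotProduct_mulVec, vecMul_vecMul, ← star_eq_conjTranspose,
    mem_unitaryGroup_iff'.mp hU, vecMul_one]

lemma IsHermitian.dotProduct_cfc_mulVec {A : Matrix ι ι ℂ} (hA : A.IsHermitian)
    (f : ℝ → ℝ) (a : ι → ℂ) :
    star (hA.eigenvectorUnitary *ᵥ a) ⬝ᵥ (cfc f A *ᵥ (hA.eigenvectorUnitary *ᵥ a)) =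
      ((∑ i, f (hA.eigenvalues i) * Complex.normSq (a i) : ℝ) : ℂ) := by
  rw [hA.cfc_eq, IsHermitian.cfc, Unitary.conjStarAlgAut_apply, mulVec_mulVec, mul_assoc,
    mul_assoc, Unitary.coe_star_mul_self, mul_one, ← mulVec_mulVec,
    dotProduct_unitary_mulVec hA.eigenvectorUnitary.2]
  simp [dotProduct, mulVec_diagonal, Complex.normSq_eq_conj_mul_self, mul_left_comm]

lemma IsHermitian.cfc_mul_add_const {A : Matrix ι ι ℂ} (hA : A.IsHermitian) (d c : ℝ) :
    cfc (fun x => d * x + c) A = d • A + algebraMap ℝ _ c := by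
  rw [cfc_add_const c (d * ·) A, cfc_const_mul_id d A]

lemma IsHermitian.cfc_add_sub_le_cfc_mul_add_const {A B : Matrix ι ι ℂ} (hA : A.IsHermitian)
    (hB : B.PosSemidef) {g : ℝ → ℝ} {d c : ℝ} (hd : d ≤ 1)
    (hg : ∀ x ∈ spectrum ℝ (A + B), g x ≤ d * x + c) :
    cfc g (A + B) - B ≤ cfc (fun x => d * x + c) A := calc
  cfc g (A + B) - B ≤ cfc (fun x => d * x + c) (A + B) - B :=
    sub_le_sub_right (cfc_mono hg (finite_real_spectrum.continuousOn g)) B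
  _ = cfc (fun x => d * x + c) A - (1 - d) • B := by
    rw [(hA.add hB.1).cfc_mul_add_const, hA.cfc_mul_add_const]
    module
  _ ≤ cfc (fun x => d * x + c) A := sub_le_self _ (hB.smul (sub_nonneg.2 hd)).nonneg

end Spectral

variable {n : ℕ}

lemma matFun_eq_cfc (f : ℝ → ℝ) {A : Matrix (Fin n) (Fin n) ℂ} (hA : A.IsHermitian) :
    matFun f A = cfc f A := by
  rw [matFun, dif_pos hA, hA.cfc_eq]
  rfl

lemma PosSemidef.eigsDesc_nonneg {A : Matrix (Fin n) (Fin n) ℂ} (hA : A.PosSemidef) (k : Fin n) :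
    0 ≤ eigsDesc A k := by
  rw [eigsDesc, dif_pos hA.1]
  exact hA.eigenvalues_nonneg _

theorem eigsDesc_le_of_le_cfc {A C : Matrix (Fin n) (Fin n) ℂ} (hA : A.IsHermitian)
    (hC : C.IsHermitian) {f : ℝ → ℝ} (hf : Monotone f) (hAC : A ≤ cfc f C) (k : Fin n) :
    eigsDesc A k ≤ f (eigsDesc C k) := by
  set μ := hA.eigenvalues
  set ν := hC.eigenvalues
  set I := (Finset.Ici k.rev).image (Tuple.sort μ)
  set J := (Finset.Iic k.rev).image (Tuple.sort ν)
  -- `Tuple.sort` sorts increasingly: on `I` the eigenvalues of `A` are `≥ λ_k^↓(A)`, on `J`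
  -- those of `C` are `≤ λ_k^↓(C)`, and `#I + #J = n + 1`.
  obtain ⟨a, b, ha0, haI, hbJ, hab⟩ := exists_ne_zero_mulVec_eq_mulVec_of_lt_card_add_card
    (Unitary.isUnit_coe (U := hA.eigenvectorUnitary))
    (Unitary.isUnit_coe (U := hC.eigenvectorUnitary)) (I := I) (J := J) (by
      rw [Finset.card_image_of_injective _ (Tuple.sort μ).injective,
        Finset.card_image_of_injective _ (Tuple.sort ν).injective, Fin.card_Ici, Fin.card_Iic,
        Fintype.card_fin]
      omega)
  set N := ∑ i, Complex.normSq (a i)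
  have hN : 0 < N := by
    obtain ⟨i, hi⟩ := Function.ne_iff.mp ha0
    exact (Complex.normSq_pos.mpr hi).trans_le
      (Finset.single_le_sum (fun j _ => Complex.normSq_nonneg (a j)) (Finset.mem_univ i))
  have hNb : ∑ i, Complex.normSq (b i) = N := by
    have := dotProduct_unitary_mulVec hA.eigenvectorUnitary.2 a a
    rw [hab, dotProduct_unitary_mulVec hC.eigenvectorUnitary.2,
      star_dotProduct_self_eq_sum_normSq, star_dotProduct_self_eq_sum_normSq] at this
    exact_mod_cast this
  have hquad : ∑ i, μ i * Complex.normSq (a i) ≤ ∑ i, f (ν i) * Complex.normSq (b i) := by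
    have hAa := hA.dotProduct_cfc_mulVec id a
    rw [cfc_id ℝ A] at hAa
    have := (hAC : (cfc f C - A).PosSemidef).dotProduct_mulVec_nonneg (hA.eigenvectorUnitary *ᵥ a)
    rwa [sub_mulVec, dotProduct_sub, hAa, hab, hC.dotProduct_cfc_mulVec f b,
      ← Complex.ofReal_sub, Complex.zero_le_real, sub_nonneg] at this
  have hlow : eigsDesc A k * N ≤ ∑ i, μ i * Complex.normSq (a i) := by
    rw [Finset.mul_sum, eigsDesc, dif_pos hA]
    refine sum_mul_le_sum_mul_of_le_on_support (I := I) (fun i => Complex.normSq_nonneg _)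
      (fun i hi => by simp [haI i hi]) fun i hi => ?_
    obtain ⟨m, hm, rfl⟩ := Finset.mem_image.mp hi
    exact Tuple.monotone_sort μ (Finset.mem_Ici.mp hm)
  have hup : ∑ i, f (ν i) * Complex.normSq (b i) ≤ f (eigsDesc C k) * N := by
    rw [← hNb, Finset.mul_sum, eigsDesc, dif_pos hC]
    refine sum_mul_le_sum_mul_of_le_on_support (I := J) (fun i => Complex.normSq_nonneg _)
      (fun i hi => by simp [hbJ i hi]) fun i hi => ?_
    obtain ⟨m, hm, rfl⟩ := Finset.mem_image.mp hi
    exact hf (Tuple.monotone_sort ν (Finset.mem_Iic.mp hm))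
  exact le_of_mul_le_mul_right (hlow.trans (hquad.trans hup)) hN

end Matrix

theorem eig_concave_shift_general {n : ℕ} (g : ℝ → ℝ)
    (hgmono : MonotoneOn g (Set.Ici (0 : ℝ)))
    (hgconc : ConcaveOn ℝ (Set.Ici (0 : ℝ)) g)
    (hg' : ∀ x ∈ Set.Ici (0 : ℝ), ∃ d ≤ (1 : ℝ),
      Filter.Tendsto (fun t => (g (x + t) - g x) / t) (nhdsWithin 0 (Set.Ioi 0)) (nhds d))
    (B C : Matrix (Fin n) (Fin n) ℂ) (hB : B.PosSemidef) (hC : C.PosSemidef)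
    (k : Fin n) :
    eigsDesc (matFun g (C + B) - B) k ≤ g (eigsDesc C k) := by
  set x₀ := eigsDesc C k
  have hx₀ : x₀ ∈ Ici (0 : ℝ) := hC.eigsDesc_nonneg k
  have hnhds : Ici (0 : ℝ) ∈ 𝓝[>] x₀ :=
    mem_of_superset self_mem_nhdsWithin (Ioi_subset_Ici_self.trans (Ici_subset_Ici.2 hx₀))
  obtain ⟨d, hd1, hslope⟩ := hg' x₀ hx₀
  have hderiv := hasDerivWithinAt_Ioi_of_tendsto_slope_zero_right hslope
  have hd0 : 0 ≤ d := hgmono.nonneg_of_hasDerivWithinAt_Ioi hx₀ hnhds hderiv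
  have hCB := hC.add hB
  have hle : cfc g (C + B) - B ≤ cfc (fun x => d * x + (g x₀ - d * x₀)) C :=
    hC.1.cfc_add_sub_le_cfc_mul_add_const hB hd1 fun x hx => by
      have := hgconc.le_tangent_of_hasDerivWithinAt_Ioi hx₀
        (spectrum_nonneg_of_nonneg hCB.nonneg hx) hnhds hderiv
      linarith
  rw [Matrix.matFun_eq_cfc g hCB.1]
  calc eigsDesc (cfc g (C + B) - B) k ≤ d * x₀ + (g x₀ - d * x₀) :=
        Matrix.eigsDesc_le_of_le_cfc ((cfc_predicate g (C + B)).sub hB.1) hC.1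
          ((monotone_id.const_mul hd0).add_const _) hle k
    _ = g x₀ := by ring

/-- Key step in the proof of Theorem 1: if `g` is non-negative, increasing and
concave on `[0,∞)` with `g 0 = 0`, `g 1 = 1`, and its one-sided (right)
derivative is everywhere at most `1`, then for PSD `B, C` with `‖B‖_∞ ≤ 1`,
`λ_k^↓(g(C+B) − B) ≤ g(λ_k^↓(C))` for every `k`. -/
theorem eig_concave_shift {n : ℕ} (g : ℝ → ℝ)
    (hg0 : ∀ x ∈ Set.Ici (0 : ℝ), 0 ≤ g x)
    (hgmono : MonotoneOn g (Set.Ici (0 : ℝ)))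
    (hgconc : ConcaveOn ℝ (Set.Ici (0 : ℝ)) g)
    (hg00 : g 0 = 0) (hg1 : g 1 = 1)
    (hg' : ∀ x ∈ Set.Ici (0 : ℝ), ∃ d ≤ (1 : ℝ),
      Filter.Tendsto (fun t => (g (x + t) - g x) / t) (nhdsWithin 0 (Set.Ioi 0)) (nhds d))
    (B C : Matrix (Fin n) (Fin n) ℂ) (hB : B.PosSemidef) (hC : C.PosSemidef)
    (hBnorm : opNorm B ≤ 1) (k : Fin n) :
    eigsDesc (matFun g (C + B) - B) k ≤ g (eigsDesc C k) :=
  eig_concave_shift_general g hgmono hgconc hg' B C hB hC k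
end
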